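/- arXiv:1507.00696 — 5 statements merged into one kernel-verified Lean document; each statement's English description precedes it below -/
import Mathlib

section
/- If a measurable function f on [0,1] satisfies ‖f(·+h) − f(·)‖_{L_p[0,1]} ≤ C|h|^β for all |h| ≤ 1, with β + 1/q > α, then the generalized Besov seminorm satisfies ‖f‖_{B^{o,p,q}_{α,s}} ≤ C · 2^{1/q} · [s(β − α + 1/q)]^{−1/s}. -/
open MeasureTheory Set

/-!
The Hölder bound `‖f(· + h) − f‖_p ≤ C|h|^β` gives `Δ_q[f, δ]_p ≤ C (2δ)^{1/q} δ^β`, so the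
Besov integrand is at most `(C 2^{1/q})^s δ^{s(β − α + 1/q) − 1}`. Its integral over `(0, 1]`
is `(C 2^{1/q})^s / (s(β − α + 1/q))`, finite because the exponent exceeds `−1`.
-/

theorem rpow_setIntegral_Icc_rpow_le {g : ℝ → ℝ} {a b M q : ℝ} (hab : a ≤ b) (hq : 0 < q)
    (hg : ∀ x ∈ Icc a b, 0 ≤ g x) (hgM : ∀ x ∈ Icc a b, g x ≤ M) :
    (∫ x in Icc a b, g x ^ q) ^ (1 / q) ≤ (b - a) ^ (1 / q) * M := by
  have hM : 0 ≤ M := (hg a ⟨le_rfl, hab⟩).trans (hgM a ⟨le_rfl, hab⟩)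
  have hint : ∫ x in Icc a b, g x ^ q ≤ (b - a) * M ^ q := by
    calc ∫ x in Icc a b, g x ^ q
        ≤ ∫ _ in Icc a b, M ^ q := by
          refine integral_mono_of_nonneg ?_ (integrableOn_const measure_Icc_lt_top.ne) ?_
          · exact (ae_restrict_iff' measurableSet_Icc).2 <| .of_forall fun x hx =>
              Real.rpow_nonneg (hg x hx) q
          · exact (ae_restrict_iff' measurableSet_Icc).2 <| .of_forall fun x hx =>
              Real.rpow_le_rpow (hg x hx) (hgM x hx) hq.le
    _ = (b - a) * M ^ q := by
          rw [setIntegral_const, measureReal_def, Real.volume_Icc, smul_eq_mul,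
            ENNReal.toReal_ofReal (sub_nonneg.2 hab)]
  calc (∫ x in Icc a b, g x ^ q) ^ (1 / q)
      ≤ ((b - a) * M ^ q) ^ (1 / q) :=
        Real.rpow_le_rpow (setIntegral_nonneg measurableSet_Icc
          fun x hx => Real.rpow_nonneg (hg x hx) q) hint (by positivity)
    _ = (b - a) ^ (1 / q) * M := by
        rw [Real.mul_rpow (sub_nonneg.2 hab) (Real.rpow_nonneg hM q), ← Real.rpow_mul hM,
          mul_one_div_cancel hq.ne', Real.rpow_one]

theorem rpow_setIntegral_rpow_le_of_le_mul_abs_rpow {F : ℝ → ℝ} {C β q δ : ℝ} (hC : 0 ≤ C)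
    (hβ : 0 ≤ β) (hq : 0 < q) (hδ : 0 < δ) (hF0 : ∀ h ∈ Icc (-δ) δ, 0 ≤ F h)
    (hF : ∀ h ∈ Icc (-δ) δ, F h ≤ C * |h| ^ β) :
    (∫ h in Icc (-δ) δ, F h ^ q) ^ (1 / q) ≤ C * 2 ^ (1 / q) * δ ^ (β + 1 / q) := by
  have hFδ : ∀ h ∈ Icc (-δ) δ, F h ≤ C * δ ^ β := fun h hh =>
    (hF h hh).trans <| by gcongr; exact abs_le.2 hh
  calc (∫ h in Icc (-δ) δ, F h ^ q) ^ (1 / q)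
      ≤ (δ - -δ) ^ (1 / q) * (C * δ ^ β) :=
        rpow_setIntegral_Icc_rpow_le (by linarith) hq hF0 hFδ
    _ = C * 2 ^ (1 / q) * δ ^ (β + 1 / q) := by
        rw [sub_neg_eq_add, ← two_mul, Real.mul_rpow zero_le_two hδ.le, Real.rpow_add hδ]
        ring

theorem rpow_integral_Ioc_rpow_mul_inv_le {φ : ℝ → ℝ} {K γ s : ℝ} (hK : 0 ≤ K) (hγ : 0 < γ)
    (hs : 0 < s) (hφ0 : ∀ δ ∈ Ioc (0:ℝ) 1, 0 ≤ φ δ)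
    (hφ : ∀ δ ∈ Ioc (0:ℝ) 1, φ δ ≤ K * δ ^ γ) :
    (∫ δ in Ioc (0:ℝ) 1, φ δ ^ s * δ⁻¹) ^ (1 / s) ≤ K * (s * γ) ^ (-(1 / s)) := by
  have he : -1 < γ * s - 1 := by nlinarith
  have hnonneg : ∀ δ ∈ Ioc (0:ℝ) 1, 0 ≤ φ δ ^ s * δ⁻¹ := fun δ hδ => by
    have := hφ0 δ hδ; have := hδ.1; positivity
  have hbound : ∀ δ ∈ Ioc (0:ℝ) 1, φ δ ^ s * δ⁻¹ ≤ K ^ s * δ ^ (γ * s - 1) := by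
    intro δ hδ
    calc φ δ ^ s * δ⁻¹ ≤ (K * δ ^ γ) ^ s * δ⁻¹ := by
          have := hδ.1; have := hφ0 δ hδ; gcongr; exact hφ δ hδ
      _ = K ^ s * δ ^ (γ * s - 1) := by
          rw [Real.mul_rpow hK (Real.rpow_nonneg hδ.1.le γ), ← Real.rpow_mul hδ.1.le,
            Real.rpow_sub hδ.1, Real.rpow_one, div_eq_mul_inv, mul_assoc]
  have hpow : ∫ δ in Ioc (0:ℝ) 1, K ^ s * δ ^ (γ * s - 1) = K ^ s * (s * γ)⁻¹ := by
    rw [← intervalIntegral.integral_of_le zero_le_one, intervalIntegral.integral_const_mul,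
      integral_rpow (Or.inl he), Real.one_rpow, Real.zero_rpow (by linarith), sub_add_cancel,
      sub_zero, one_div, mul_comm s γ]
  have hint : ∫ δ in Ioc (0:ℝ) 1, φ δ ^ s * δ⁻¹ ≤ K ^ s * (s * γ)⁻¹ := by
    rw [← hpow]
    refine integral_mono_of_nonneg ((ae_restrict_iff' measurableSet_Ioc).2 (.of_forall hnonneg))
      ?_ ((ae_restrict_iff' measurableSet_Ioc).2 (.of_forall hbound))
    exact (intervalIntegrable_iff_integrableOn_Ioc_of_le zero_le_one).1
      ((intervalIntegral.intervalIntegrable_rpow' he).const_mul _)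
  calc (∫ δ in Ioc (0:ℝ) 1, φ δ ^ s * δ⁻¹) ^ (1 / s)
      ≤ (K ^ s * (s * γ)⁻¹) ^ (1 / s) := by
        gcongr
        exact setIntegral_nonneg measurableSet_Ioc hnonneg
    _ = K * (s * γ) ^ (-(1 / s)) := by
        rw [Real.mul_rpow (by positivity) (by positivity), ← Real.rpow_mul hK,
          mul_one_div_cancel hs.ne', Real.rpow_one, Real.inv_rpow (by positivity),
          Real.rpow_neg (by positivity)]

theorem stmt5_general (f : ℝ → ℝ)
    (p q s α C β : ℝ) (hq : 1 ≤ q) (hs : 1 ≤ s)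
    (hC : 0 < C) (hβ0 : 0 < β) (hβα : β + 1 / q > α)
    (hHolder : ∀ h : ℝ, |h| ≤ 1 →
      (∫ t in Icc (0:ℝ) 1, |f (t + h) - f t| ^ p) ^ (1 / p) ≤ C * |h| ^ β) :
    (∫ δ in Ioc (0:ℝ) 1,
        (δ ^ (-α) *
          (∫ h in Icc (-δ) δ,
            ((∫ t in Icc (0:ℝ) 1, |f (t + h) - f t| ^ p) ^ (1 / p)) ^ q) ^ (1 / q)) ^ s
          * δ⁻¹) ^ (1 / s)
      ≤ C * 2 ^ (1 / q) * (s * (β - α + 1 / q)) ^ (-(1 / s)) := by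
  have hq0 : 0 < q := by linarith
  refine rpow_integral_Ioc_rpow_mul_inv_le (by positivity) (by linarith) (by linarith)
    (fun δ hδ => by have := hδ.1; positivity) fun δ ⟨hδ0, hδ1⟩ => ?_
  have hΔ := rpow_setIntegral_rpow_le_of_le_mul_abs_rpow hC.le hβ0.le hq0 hδ0
    (fun h _ => by positivity) fun h hh => hHolder h ((abs_le.2 hh).trans hδ1)
  calc δ ^ (-α) * (∫ h in Icc (-δ) δ,
          ((∫ t in Icc (0:ℝ) 1, |f (t + h) - f t| ^ p) ^ (1 / p)) ^ q) ^ (1 / q)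
      ≤ δ ^ (-α) * (C * 2 ^ (1 / q) * δ ^ (β + 1 / q)) := by gcongr
    _ = C * 2 ^ (1 / q) * δ ^ (β - α + 1 / q) := by
        rw [show β - α + 1 / q = -α + (β + 1 / q) by ring, Real.rpow_add hδ0 (-α)]
        ring

/-- If `‖f(·+h) − f(·)‖_{L_p[0,1]} ≤ C|h|^β` for all `|h| ≤ 1`, with
`β + 1/q > α`, then the generalized Besov seminorm satisfies
`‖f‖_{B^{o,p,q}_{α,s}} ≤ C · 2^{1/q} · (s(β − α + 1/q))^{−1/s}`. -/
theorem stmt5 (f : ℝ → ℝ) (hmeas : Measurable f)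
    (hvanish : ∀ t : ℝ, t ∉ Icc (0:ℝ) 1 → f t = 0)
    (p q s α C β : ℝ) (hp : 1 ≤ p) (hq : 1 ≤ q) (hs : 1 ≤ s)
    (hC : 0 < C) (hβ0 : 0 < β) (hβ1 : β ≤ 1) (hβα : β + 1 / q > α)
    (hHolder : ∀ h : ℝ, |h| ≤ 1 →
      (∫ t in Icc (0:ℝ) 1, |f (t + h) - f t| ^ p) ^ (1 / p) ≤ C * |h| ^ β) :
    (∫ δ in Ioc (0:ℝ) 1,
        (δ ^ (-α) *
          (∫ h in Icc (-δ) δ,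
            ((∫ t in Icc (0:ℝ) 1, |f (t + h) - f t| ^ p) ^ (1 / p)) ^ q) ^ (1 / q)) ^ s
          * δ⁻¹) ^ (1 / s)
      ≤ C * 2 ^ (1 / q) * (s * (β - α + 1 / q)) ^ (-(1 / s)) :=
  stmt5_general f p q s α C β hq hs hC hβ0 hβα hHolder
end

section
/- Remark 2.4: If the Pisier distance of a random process satisfies d_m(t+h, t) ≤ C_m |h|^β with β(m) ∈ (0,1], β + 1/q > α, and m ≥ max(p,q,s), then ξ(·) ∈ B^{o,p,q}_{α,s} almost surely and ( E ‖ξ‖_{B^{o,p,q}_{α,s}}^m )^{1/m} ≤ C_m · 2^{1/q} · s^{−1/s} · (β − α + 1/q)^{−1/s}. -/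
/-!
Since `m ≥ max(p, q, s)`, Minkowski's integral inequality moves the `L_m(P)` norm inside each of
the three nested norms that make up the Besov seminorm. There the hypothesis bounds the increment
`‖ξ(t+h) - ξ(t)‖_{L_m(P)}` by `C_m |h|^β` uniformly in `t`, so integrating over `t ∈ [0,1]` and
`h ∈ [-δ,δ]` bounds the moment of `Δ_q[ξ,δ]_p` by `C_m 2^{1/q} δ^{β+1/q}`, and the remaining
integral `∫₀¹ δ^{(β-α+1/q)s-1} dδ = 1/((β-α+1/q)s)` produces the constant. A finite `m`-th moment
forces the seminorm to be finite almost surely.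
-/

open MeasureTheory Set ENNReal Function

/-- Mixed-norm building block: `L_e` norm (with real exponent `e`) of an
`ℝ≥0∞`-valued function with respect to a measure. -/
noncomputable def lpn {α : Type*} [MeasurableSpace α] (μ : MeasureTheory.Measure α)
    (e : ℝ) (g : α → ℝ≥0∞) : ℝ≥0∞ :=
  (∫⁻ a, (g a) ^ e ∂μ) ^ (1 / e)

/-- Generalized modulus of continuity `Δ_q[f,δ]_p`. -/
noncomputable def deltaQ (p q δ : ℝ) (f : ℝ → ℝ) : ℝ≥0∞ :=
  lpn (volume.restrict (Icc (-δ) δ)) q (fun h =>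
    lpn (volume.restrict (Icc (0:ℝ) 1)) p (fun t => ENNReal.ofReal |f (t + h) - f t|))

/-- Generalized Besov seminorm `‖f‖_{B^{o,p,q}_{α,s}}`. -/
noncomputable def besovSemi (p q s α : ℝ) (f : ℝ → ℝ) : ℝ≥0∞ :=
  (∫⁻ δ in Ioc (0:ℝ) 1,
      (ENNReal.ofReal (δ ^ (-α)) * deltaQ p q δ f) ^ s * ENNReal.ofReal δ⁻¹) ^ (1 / s)

section Lpn

variable {X : Type*} [MeasurableSpace X] {μ : Measure X} {e : ℝ}

theorem lpn_mono (he : 0 ≤ e) {f g : X → ℝ≥0∞} (h : ∀ᵐ x ∂μ, f x ≤ g x) :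
    lpn μ e f ≤ lpn μ e g :=
  rpow_le_rpow (lintegral_mono_ae (h.mono fun _ hx => rpow_le_rpow hx he)) (by positivity)

theorem lpn_const_mul (he : 0 < e) (c : ℝ≥0∞) {f : X → ℝ≥0∞} (hf : AEMeasurable f μ) :
    lpn μ e (fun x => c * f x) = c * lpn μ e f := by
  simp only [lpn, mul_rpow_of_nonneg _ _ he.le]
  rw [lintegral_const_mul'' _ (hf.pow_const e), mul_rpow_of_nonneg _ _ (by positivity),
    ← rpow_mul, mul_one_div_cancel he.ne', rpow_one]

theorem lpn_const (he : 0 < e) (c : ℝ≥0∞) : lpn μ e (fun _ => c) = c * μ univ ^ (1 / e) := by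
  rw [lpn, lintegral_const, mul_rpow_of_nonneg _ _ (by positivity), ← rpow_mul,
    mul_one_div_cancel he.ne', rpow_one]

theorem lpn_mul_rpow_one_div (he : 0 < e) (f w : X → ℝ≥0∞) :
    lpn μ e (fun x => f x * w x ^ (1 / e)) = (∫⁻ x, f x ^ e * w x ∂μ) ^ (1 / e) := by
  simp only [lpn, mul_rpow_of_nonneg _ _ he.le, ← rpow_mul, one_div_mul_cancel he.ne', rpow_one]

theorem ae_lt_top_of_lpn_ne_top (he : 0 < e) {f : X → ℝ≥0∞} (hf : AEMeasurable f μ)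
    (h : lpn μ e f ≠ ∞) : ∀ᵐ x ∂μ, f x < ∞ := by
  have hint : ∫⁻ x, f x ^ e ∂μ ≠ ∞ := by
    simpa [lpn, he.le, he] using h
  filter_upwards [ae_lt_top' (hf.pow_const e) hint] with x hx
  exact (rpow_lt_top_iff_of_pos he).1 hx

theorem Measurable.lpn_prod_right {Y : Type*} [MeasurableSpace Y] {ν : Measure Y} [SFinite ν]
    {g : X → Y → ℝ≥0∞} (hg : Measurable (uncurry g)) (e : ℝ) :
    Measurable fun x => lpn ν e (g x) :=
  (hg.pow_const e).lintegral_prod_right'.pow_const _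

end Lpn

section Minkowski

variable {X Y : Type*} [MeasurableSpace X] [MeasurableSpace Y] {μ : Measure X} {ν : Measure Y}

/-- Hölder against the weight `H ^ (r - 1)` gives `J ≤ A * J ^ (1 / r')` for `J = ∫ H ^ r`, and
finiteness of `J` lets us cancel. -/
theorem lintegral_rpow_le_of_le_lintegral [SFinite μ] [SFinite ν] {r : ℝ} (hr : 1 < r)
    {g : X → Y → ℝ≥0∞} (hg : Measurable (uncurry g)) {H : X → ℝ≥0∞} (hH : Measurable H)
    (hHg : ∀ x, H x ≤ ∫⁻ y, g x y ∂ν) (hfin : ∫⁻ x, H x ^ r ∂μ ≠ ∞) :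
    (∫⁻ x, H x ^ r ∂μ) ^ (1 / r) ≤ ∫⁻ y, (∫⁻ x, g x y ^ r ∂μ) ^ (1 / r) ∂ν := by
  have hr0 : 0 < r := zero_lt_one.trans hr
  have hconj : r.HolderConjugate r.conjExponent := .conjExponent hr
  set r' := r.conjExponent
  set J := ∫⁻ x, H x ^ r ∂μ
  set A := ∫⁻ y, (∫⁻ x, g x y ^ r ∂μ) ^ (1 / r) ∂ν
  rcases eq_or_ne J 0 with hJ | hJ
  · simp [hJ, hr0]
  have hweight : ∫⁻ x, (H x ^ (r - 1)) ^ r' ∂μ = J :=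
    lintegral_congr fun x => by rw [← ENNReal.rpow_mul, hconj.sub_one_mul_conj]
  have hJA : J ≤ A * J ^ (1 / r') := calc
    J = ∫⁻ x, H x * H x ^ (r - 1) ∂μ := lintegral_congr fun x => by
        conv_lhs => rw [← add_sub_cancel 1 r]
        rw [rpow_add_of_nonneg _ _ zero_le_one (by linarith), rpow_one]
    _ ≤ ∫⁻ x, (∫⁻ y, g x y ∂ν) * H x ^ (r - 1) ∂μ :=
        lintegral_mono fun x => mul_le_mul_left (hHg x) _
    _ = ∫⁻ y, ∫⁻ x, g x y * H x ^ (r - 1) ∂μ ∂ν := by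
        simp_rw [← lintegral_mul_const _ hg.of_uncurry_left]
        exact lintegral_lintegral_swap
          (hg.mul ((hH.comp measurable_fst).pow_const _)).aemeasurable
    _ ≤ ∫⁻ y, (∫⁻ x, g x y ^ r ∂μ) ^ (1 / r) * J ^ (1 / r') ∂ν := lintegral_mono fun y => by
        have holder := ENNReal.lintegral_mul_le_Lp_mul_Lq μ hconj
          (hg.of_uncurry_right (y := y)).aemeasurable (hH.pow_const (r - 1)).aemeasurable
        rwa [hweight] at holder
    _ = A * J ^ (1 / r') := lintegral_mul_const _
        (((hg.comp measurable_swap).pow_const r).lintegral_prod_right'.pow_const _)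
  have hJ'0 : J ^ (1 / r') ≠ 0 := by simp [hJ, hconj.symm.pos.le]
  have hJ'top : J ^ (1 / r') ≠ ∞ := rpow_ne_top_of_nonneg (by simp [hconj.symm.pos.le]) hfin
  rw [← ENNReal.mul_le_mul_iff_left hJ'0 hJ'top, ← ENNReal.rpow_add_of_nonneg _ _
    (by positivity) (by simp [hconj.symm.pos.le]), hconj.one_div_add_one_div, div_one, rpow_one]
  exact hJA

theorem lintegral_lintegral_rpow_le [IsFiniteMeasure μ] [SFinite ν] {r : ℝ} (hr : 1 ≤ r)
    {g : X → Y → ℝ≥0∞} (hg : Measurable (uncurry g)) :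
    (∫⁻ x, (∫⁻ y, g x y ∂ν) ^ r ∂μ) ^ (1 / r) ≤ ∫⁻ y, (∫⁻ x, g x y ^ r ∂μ) ^ (1 / r) ∂ν := by
  rcases hr.eq_or_lt with rfl | hr
  · simpa using (lintegral_lintegral_swap hg.aemeasurable).le
  have hr0 : 0 < r := zero_lt_one.trans hr
  set G := fun x => ∫⁻ y, g x y ∂ν
  have hG : Measurable G := hg.lintegral_prod_right'
  -- the truncations `min G n` have finite `r`-th moment because `μ` is finite
  have htrunc (n : ℕ) : (∫⁻ x, min (G x) n ^ r ∂μ) ^ (1 / r)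
      ≤ ∫⁻ y, (∫⁻ x, g x y ^ r ∂μ) ^ (1 / r) ∂ν := by
    refine lintegral_rpow_le_of_le_lintegral hr hg (hG.min measurable_const)
      (fun x => min_le_left _ _) (ne_top_of_le_ne_top ?_ (lintegral_mono fun x =>
        rpow_le_rpow (min_le_right (G x) n) hr0.le))
    rw [lintegral_const]
    exact mul_ne_top (rpow_ne_top_of_nonneg hr0.le (natCast_ne_top n)) (measure_ne_top μ univ)
  have hsup (x : X) : G x ^ r = ⨆ n : ℕ, min (G x) n ^ r := by
    have hcomm := (orderIsoRpow r hr0).map_iSup fun n : ℕ => min (G x) n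
    simp only [orderIsoRpow_apply] at hcomm
    rw [← hcomm, ← inf_iSup_eq, iSup_natCast, inf_top_eq]
  calc (∫⁻ x, G x ^ r ∂μ) ^ (1 / r)
      = (⨆ n : ℕ, ∫⁻ x, min (G x) n ^ r ∂μ) ^ (1 / r) := by
        rw [lintegral_congr hsup, lintegral_iSup (fun n => (hG.min measurable_const).pow_const r)
          fun m n hmn x => rpow_le_rpow (min_le_min_left _ (Nat.mono_cast hmn)) hr0.le]
    _ = ⨆ n : ℕ, (∫⁻ x, min (G x) n ^ r ∂μ) ^ (1 / r) :=
        (orderIsoRpow (1 / r) (by positivity)).map_iSup _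
    _ ≤ _ := iSup_le htrunc

theorem lpn_lpn_le [IsFiniteMeasure μ] [SFinite ν] {e m : ℝ} (he : 0 < e) (hem : e ≤ m)
    {g : X → Y → ℝ≥0∞} (hg : Measurable (uncurry g)) :
    lpn μ m (fun x => lpn ν e (g x)) ≤ lpn ν e (fun y => lpn μ m (fun x => g x y)) := by
  have hm : 0 < m := he.trans_le hem
  have key := rpow_le_rpow (lintegral_lintegral_rpow_le (μ := μ) (ν := ν)
    ((one_le_div he).2 hem) (g := fun x y => g x y ^ e) (hg.pow_const e)) (one_div_nonneg.2 he.le)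
  simp only [lpn, ← rpow_mul] at key ⊢
  convert key using 3 <;> field_simp

end Minkowski

theorem lintegral_Ioc_zero_one_rpow_sub_one {a : ℝ} (ha : 0 < a) :
    ∫⁻ δ in Ioc 0 1, ENNReal.ofReal (δ ^ (a - 1)) = ENNReal.ofReal (1 / a) := by
  have hexp : (-1 : ℝ) < a - 1 := by linarith
  have hint : IntegrableOn (fun δ : ℝ => δ ^ (a - 1)) (Ioc 0 1) :=
    (intervalIntegrable_iff_integrableOn_Ioc_of_le zero_le_one).1
      (intervalIntegral.intervalIntegrable_rpow' hexp)
  rw [← ofReal_integral_eq_lintegral_ofReal hint ((ae_restrict_iff' measurableSet_Ioc).2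
      (.of_forall fun δ hδ => Real.rpow_nonneg hδ.1.le _)),
    ← intervalIntegral.integral_of_le zero_le_one, integral_rpow (.inl hexp), sub_add_cancel,
    Real.one_rpow, Real.zero_rpow ha.ne', sub_zero]

theorem lpn_Ioc_zero_one_rpow {a s : ℝ} (ha : 0 < a) (hs : 0 < s) :
    lpn (volume.restrict (Ioc 0 1)) s (fun δ => ENNReal.ofReal (δ ^ (a - 1 / s)))
      = ENNReal.ofReal (s ^ (-(1 / s)) * a ^ (-(1 / s))) := by
  have hpow : EqOn (fun δ : ℝ => ENNReal.ofReal (δ ^ (a - 1 / s)) ^ s)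
      (fun δ => ENNReal.ofReal (δ ^ (a * s - 1))) (Ioc 0 1) := fun δ hδ => by
    dsimp only
    rw [ofReal_rpow_of_nonneg (Real.rpow_nonneg hδ.1.le _) hs.le, ← Real.rpow_mul hδ.1.le,
      sub_mul, one_div_mul_cancel hs.ne']
  rw [lpn, setLIntegral_congr_fun measurableSet_Ioc hpow,
    lintegral_Ioc_zero_one_rpow_sub_one (mul_pos ha hs),
    ofReal_rpow_of_nonneg (by positivity) (by positivity), one_div (a * s),
    Real.inv_rpow (by positivity), ← Real.rpow_neg (by positivity), Real.mul_rpow ha.le hs.le,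
    mul_comm]

theorem measurable_setLIntegral_Icc {X : Type*} [MeasurableSpace X] {ν : Measure ℝ} [SFinite ν]
    {F : X → ℝ → ℝ≥0∞} (hF : Measurable (uncurry F)) {a b : X → ℝ} (ha : Measurable a)
    (hb : Measurable b) : Measurable fun x => ∫⁻ y in Icc (a x) (b x), F x y ∂ν := by
  have hset : MeasurableSet {z : X × ℝ | z.2 ∈ Icc (a z.1) (b z.1)} :=
    (measurableSet_le (ha.comp measurable_fst) measurable_snd).inter
      (measurableSet_le measurable_snd (hb.comp measurable_fst))
  simp_rw [← lintegral_indicator measurableSet_Icc, indicator_apply]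
  exact (Measurable.ite hset hF measurable_const).lintegral_prod_right' (ν := ν)

noncomputable def incrementNorm (p : ℝ) (f : ℝ → ℝ) (h : ℝ) : ℝ≥0∞ :=
  lpn (volume.restrict (Icc 0 1)) p fun t => ENNReal.ofReal |f (t + h) - f t|

section Moments

variable {Ω : Type*} [MeasurableSpace Ω] {ξ : ℝ → Ω → ℝ} {p q s α m : ℝ}

theorem measurable_increment (hξ : Measurable (uncurry ξ)) :
    Measurable fun z : (Ω × ℝ) × ℝ => ENNReal.ofReal |ξ (z.2 + z.1.2) z.1.1 - ξ z.2 z.1.1| :=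
  ENNReal.measurable_ofReal.comp <|
    ((hξ.comp ((measurable_snd.add measurable_fst.snd).prodMk measurable_fst.fst)).sub
      (hξ.comp (measurable_snd.prodMk measurable_fst.fst))).abs

theorem measurable_incrementNorm (hξ : Measurable (uncurry ξ)) (p : ℝ) :
    Measurable (uncurry fun ω h => incrementNorm p (fun t => ξ t ω) h) :=
  (measurable_increment hξ).lpn_prod_right p

theorem measurable_deltaQ (hξ : Measurable (uncurry ξ)) (p q : ℝ) :
    Measurable (uncurry fun ω δ => deltaQ p q δ (fun t => ξ t ω)) :=
  (measurable_setLIntegral_Icc ((measurable_incrementNorm hξ p).comp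
      (measurable_fst.fst.prodMk measurable_snd) |>.pow_const q)
    measurable_snd.neg measurable_snd).pow_const _

theorem measurable_besovIntegrand (hξ : Measurable (uncurry ξ)) (p q s α : ℝ) :
    Measurable (uncurry fun ω (δ : ℝ) =>
      ENNReal.ofReal (δ ^ (-α)) * deltaQ p q δ (fun t => ξ t ω) * ENNReal.ofReal δ⁻¹ ^ (1 / s)) :=
  ((ENNReal.measurable_ofReal.comp (measurable_snd.pow_const _)).mul (measurable_deltaQ hξ p q)).mul
    ((ENNReal.measurable_ofReal.comp measurable_snd.inv).pow_const _)

theorem besovSemi_eq_lpn (hs : 0 < s) (f : ℝ → ℝ) :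
    besovSemi p q s α f = lpn (volume.restrict (Ioc 0 1)) s
      (fun δ => ENNReal.ofReal (δ ^ (-α)) * deltaQ p q δ f * ENNReal.ofReal δ⁻¹ ^ (1 / s)) :=
  (lpn_mul_rpow_one_div hs _ _).symm

theorem measurable_besovSemi (hξ : Measurable (uncurry ξ)) (hs : 0 < s) :
    Measurable fun ω => besovSemi p q s α (fun t => ξ t ω) := by
  simp_rw [besovSemi_eq_lpn hs]
  exact (measurable_besovIntegrand hξ p q s α).lpn_prod_right s

variable (P : Measure Ω) [IsFiniteMeasure P]

theorem lpn_incrementNorm_le (hξ : Measurable (uncurry ξ)) (hp : 0 < p) (hpm : p ≤ m)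
    {h : ℝ} {c : ℝ≥0∞}
    (hinc : ∀ t, lpn P m (fun ω => ENNReal.ofReal |ξ (t + h) ω - ξ t ω|) ≤ c) :
    lpn P m (fun ω => incrementNorm p (fun t => ξ t ω) h) ≤ c :=
  calc _ ≤ lpn (volume.restrict (Icc 0 1)) p
        (fun t => lpn P m (fun ω => ENNReal.ofReal |ξ (t + h) ω - ξ t ω|)) :=
        lpn_lpn_le hp hpm ((measurable_increment hξ).comp
          ((measurable_fst.prodMk measurable_const).prodMk measurable_snd))
    _ ≤ lpn (volume.restrict (Icc 0 1)) p (fun _ => c) := lpn_mono hp.le (.of_forall hinc)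
    _ = c := by simp [lpn_const hp]

theorem lpn_deltaQ_le (hξ : Measurable (uncurry ξ)) (hq : 0 < q) (hqm : q ≤ m) {δ : ℝ}
    {c : ℝ≥0∞}
    (hinc : ∀ h ∈ Icc (-δ) δ, lpn P m (fun ω => incrementNorm p (fun t => ξ t ω) h) ≤ c) :
    lpn P m (fun ω => deltaQ p q δ (fun t => ξ t ω))
      ≤ c * ENNReal.ofReal (2 * δ) ^ (1 / q) :=
  calc _ ≤ lpn (volume.restrict (Icc (-δ) δ)) q
        (fun h => lpn P m (fun ω => incrementNorm p (fun t => ξ t ω) h)) :=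
        lpn_lpn_le hq hqm (measurable_incrementNorm hξ p)
    _ ≤ lpn (volume.restrict (Icc (-δ) δ)) q (fun _ => c) :=
        lpn_mono hq.le ((ae_restrict_iff' measurableSet_Icc).2 (.of_forall hinc))
    _ = c * ENNReal.ofReal (2 * δ) ^ (1 / q) := by
        rw [lpn_const hq, Measure.restrict_apply_univ, Real.volume_Icc, sub_neg_eq_add, two_mul]

theorem lpn_deltaQ_le_of_lpn_increment_le (hξ : Measurable (uncurry ξ)) (hp : 0 < p)
    (hpm : p ≤ m) (hq : 0 < q) (hqm : q ≤ m) {C β : ℝ} (hC : 0 ≤ C) (hβ : 0 ≤ β)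
    (hd : ∀ t h : ℝ, |h| ≤ 1 →
      lpn P m (fun ω => ENNReal.ofReal |ξ (t + h) ω - ξ t ω|) ≤ ENNReal.ofReal (C * |h| ^ β))
    {δ : ℝ} (hδ : δ ∈ Ioc (0 : ℝ) 1) :
    lpn P m (fun ω => deltaQ p q δ (fun t => ξ t ω))
      ≤ ENNReal.ofReal (C * 2 ^ (1 / q) * δ ^ (β + 1 / q)) := by
  obtain ⟨hδ0, hδ1⟩ := hδ
  have hinc (h : ℝ) (hh : h ∈ Icc (-δ) δ) :
      lpn P m (fun ω => incrementNorm p (fun t => ξ t ω) h) ≤ ENNReal.ofReal (C * δ ^ β) := by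
    have hhδ : |h| ≤ δ := abs_le.2 hh
    refine lpn_incrementNorm_le P hξ hp hpm fun t => (hd t h (hhδ.trans hδ1)).trans ?_
    gcongr
  calc _ ≤ ENNReal.ofReal (C * δ ^ β) * ENNReal.ofReal (2 * δ) ^ (1 / q) :=
        lpn_deltaQ_le P hξ hq hqm hinc
    _ = _ := by
        rw [ofReal_rpow_of_nonneg (by positivity) (by positivity), ← ofReal_mul (by positivity),
          Real.mul_rpow zero_le_two hδ0.le, Real.rpow_add hδ0]
        ring_nf

theorem lpn_besovSemi_le (hξ : Measurable (uncurry ξ)) (hs : 0 < s) (hsm : s ≤ m) {K a : ℝ}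
    (hK : 0 ≤ K) (ha : α < a)
    (hmod : ∀ δ ∈ Ioc (0 : ℝ) 1,
      lpn P m (fun ω => deltaQ p q δ (fun t => ξ t ω)) ≤ ENNReal.ofReal (K * δ ^ a)) :
    lpn P m (fun ω => besovSemi p q s α (fun t => ξ t ω))
      ≤ ENNReal.ofReal (K * s ^ (-(1 / s)) * (a - α) ^ (-(1 / s))) := by
  have hm : 0 < m := hs.trans_le hsm
  have hpoint : ∀ δ ∈ Ioc (0 : ℝ) 1, lpn P m (fun ω => ENNReal.ofReal (δ ^ (-α))
      * deltaQ p q δ (fun t => ξ t ω) * ENNReal.ofReal δ⁻¹ ^ (1 / s))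
      ≤ ENNReal.ofReal K * ENNReal.ofReal (δ ^ (a - α - 1 / s)) := by
    intro δ hδ
    have hδ0 := hδ.1
    simp_rw [mul_right_comm _ (deltaQ _ _ _ _)]
    rw [lpn_const_mul hm _ (measurable_deltaQ hξ p q).of_uncurry_right.aemeasurable]
    calc _ ≤ ENNReal.ofReal (δ ^ (-α)) * ENNReal.ofReal δ⁻¹ ^ (1 / s)
          * ENNReal.ofReal (K * δ ^ a) :=
          mul_le_mul_right (hmod δ hδ) _
      _ = _ := by
          rw [ofReal_rpow_of_nonneg (inv_nonneg.2 hδ0.le) (by positivity),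
            ← ofReal_mul (by positivity), ← ofReal_mul (by positivity), ← ofReal_mul hK]
          congr 1
          rw [Real.inv_rpow hδ0.le, ← Real.rpow_neg hδ0.le, sub_eq_add_neg, sub_eq_add_neg,
            Real.rpow_add hδ0, Real.rpow_add hδ0]
          ring
  simp_rw [besovSemi_eq_lpn hs]
  calc _ ≤ lpn (volume.restrict (Ioc 0 1)) s (fun δ => lpn P m (fun ω => ENNReal.ofReal (δ ^ (-α))
        * deltaQ p q δ (fun t => ξ t ω) * ENNReal.ofReal δ⁻¹ ^ (1 / s))) :=
        lpn_lpn_le hs hsm (measurable_besovIntegrand hξ p q s α)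
    _ ≤ lpn (volume.restrict (Ioc 0 1)) s
        (fun δ => ENNReal.ofReal K * ENNReal.ofReal (δ ^ (a - α - 1 / s))) :=
        lpn_mono hs.le ((ae_restrict_iff' measurableSet_Ioc).2 (.of_forall hpoint))
    _ = _ := by
        rw [lpn_const_mul hs _ (by fun_prop), lpn_Ioc_zero_one_rpow (sub_pos.2 ha) hs,
          ← ofReal_mul hK, mul_assoc]

end Moments

theorem stmt8_general {Ω : Type*} [MeasurableSpace Ω] (P : Measure Ω) [IsProbabilityMeasure P]
    (ξ : ℝ → Ω → ℝ) (hmeas : Measurable (Function.uncurry ξ))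
    (p q s α m Cm β : ℝ) (hp : 1 ≤ p) (hq : 1 ≤ q) (hs : 1 ≤ s)
    (hm : max p (max q s) ≤ m)
    (hCm : 0 < Cm) (hβ0 : 0 < β) (hβα : β + 1 / q > α)
    (hd : ∀ t h : ℝ, |h| ≤ 1 →
      lpn P m (fun ω => ENNReal.ofReal |ξ (t + h) ω - ξ t ω|)
        ≤ ENNReal.ofReal (Cm * |h| ^ β)) :
    (∀ᵐ ω ∂P, besovSemi p q s α (fun t => ξ t ω) < ⊤) ∧
      lpn P m (fun ω => besovSemi p q s α (fun t => ξ t ω))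
        ≤ ENNReal.ofReal (Cm * 2 ^ (1 / q) * s ^ (-(1 / s)) * (β - α + 1 / q) ^ (-(1 / s))) := by
  obtain ⟨hpm, hqm, hsm⟩ : p ≤ m ∧ q ≤ m ∧ s ≤ m := by simpa only [max_le_iff] using hm
  have hbound := lpn_besovSemi_le P hmeas (by linarith) hsm (by positivity) hβα
    fun δ hδ => lpn_deltaQ_le_of_lpn_increment_le P hmeas (by linarith) hpm (by linarith) hqm
      hCm.le hβ0.le hd hδ
  rw [add_sub_right_comm] at hbound
  exact ⟨ae_lt_top_of_lpn_ne_top (by linarith)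
    (measurable_besovSemi hmeas (by linarith)).aemeasurable (hbound.trans_lt ofReal_lt_top).ne,
    hbound⟩

/-- Remark 2.4: if the Pisier distance satisfies
`d_m(t+h,t) ≤ C_m |h|^β` with `β ∈ (0,1]`, `β + 1/q > α` and `m ≥ max(p,q,s)`, then
`ξ(·) ∈ B^{o,p,q}_{α,s}` almost surely and
`(E ‖ξ‖_{B^{o,p,q}_{α,s}}^m)^{1/m} ≤ C_m · 2^{1/q} · s^{−1/s} · (β − α + 1/q)^{−1/s}`. -/
theorem stmt8 {Ω : Type*} [MeasurableSpace Ω] (P : Measure Ω) [IsProbabilityMeasure P]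
    (ξ : ℝ → Ω → ℝ) (hmeas : Measurable (Function.uncurry ξ))
    (hvanish : ∀ t : ℝ, t ∉ Icc (0:ℝ) 1 → ∀ ω, ξ t ω = 0)
    (p q s α m Cm β : ℝ) (hp : 1 ≤ p) (hq : 1 ≤ q) (hs : 1 ≤ s)
    (hm : max p (max q s) ≤ m)
    (hCm : 0 < Cm) (hβ0 : 0 < β) (hβ1 : β ≤ 1) (hβα : β + 1 / q > α)
    (hd : ∀ t h : ℝ, |h| ≤ 1 →
      lpn P m (fun ω => ENNReal.ofReal |ξ (t + h) ω - ξ t ω|)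
        ≤ ENNReal.ofReal (Cm * |h| ^ β)) :
    (∀ᵐ ω ∂P, besovSemi p q s α (fun t => ξ t ω) < ⊤) ∧
      lpn P m (fun ω => besovSemi p q s α (fun t => ξ t ω))
        ≤ ENNReal.ofReal (Cm * 2 ^ (1 / q) * s ^ (-(1 / s)) * (β - α + 1 / q) ^ (-(1 / s))) :=
  stmt8_general P ξ hmeas p q s α m Cm β hp hq hs hm hCm hβ0 hβα hd
end

section
/- If a random variable f satisfies ‖f‖_{Gψ} ≤ 1 in the Grand Lebesgue space, i.e. (E|f|^p)^{1/p} ≤ ψ(p) for all p in the support of ψ, then its tail satisfies T_f(u) := max(P(f > u), P(f < −u)) ≤ exp( −ψ̃*(ln u) ) for u > e, where ψ̃(p) = p ln ψ(p) and ψ̃* is its Legendre transform ψ̃*(y) = sup_p (p|y| − ψ̃(p)). -/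
/-!
Markov's inequality for `|f|^p` gives `P(|f| ≥ u) ≤ (ψ(p) / u)^p = exp (-(p ln u - ψ̃(p)))` for
every admissible `p`; optimizing over `p` turns the exponent into `ψ̃*(ln u)`. Both one-sided
tails are dominated by the two-sided one.
-/

open MeasureTheory Set ENNReal

section Tail

variable {Ω : Type*} [MeasurableSpace Ω] {μ : Measure Ω} {f : Ω → ℝ}

theorem ofReal_rpow_mul_measure_le_abs_le_lintegral (hf : Measurable f) {p : ℝ} (hp : 0 ≤ p)
    (u : ℝ) :
    ENNReal.ofReal u ^ p * μ {ω | u ≤ |f ω|} ≤ ∫⁻ ω, ENNReal.ofReal |f ω| ^ p ∂μ :=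
  calc ENNReal.ofReal u ^ p * μ {ω | u ≤ |f ω|}
      ≤ ENNReal.ofReal u ^ p * μ {ω | ENNReal.ofReal u ^ p ≤ ENNReal.ofReal |f ω| ^ p} := by
        refine mul_le_mul_right (measure_mono fun ω hω => ?_) _
        exact ENNReal.rpow_le_rpow (ENNReal.ofReal_le_ofReal hω) hp
    _ ≤ ∫⁻ ω, ENNReal.ofReal |f ω| ^ p ∂μ :=
        mul_meas_ge_le_lintegral₀ (hf.abs.ennreal_ofReal.pow_const p).aemeasurable _

theorem measure_le_abs_le_exp_of_moment_le (hf : Measurable f) {p u c : ℝ} (hp : 0 < p)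
    (hu : 0 < u)
    (hmom : (∫⁻ ω, ENNReal.ofReal |f ω| ^ p ∂μ) ^ (1 / p) ≤ ENNReal.ofReal c) :
    μ {ω | u ≤ |f ω|} ≤ ENNReal.ofReal (Real.exp (-(p * Real.log u - p * Real.log c))) := by
  have hmarkov : ENNReal.ofReal u ^ p * μ {ω | u ≤ |f ω|} ≤ ENNReal.ofReal c ^ p :=
    (ofReal_rpow_mul_measure_le_abs_le_lintegral hf hp.le u).trans
      ((ENNReal.rpow_inv_le_iff hp).1 (one_div p ▸ hmom))
  have hu_ne_zero : ENNReal.ofReal u ^ p ≠ 0 := (ENNReal.rpow_pos (by simpa) (by simp)).ne'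
  rcases le_or_gt c 0 with hc | hc
  -- `ofReal c = 0`, so the tail vanishes whatever the junk value of `log c`
  · rw [ENNReal.ofReal_of_nonpos hc, ENNReal.zero_rpow_of_pos hp, nonpos_iff_eq_zero,
      mul_eq_zero] at hmarkov
    simp [hmarkov.resolve_left hu_ne_zero]
  · calc μ {ω | u ≤ |f ω|} ≤ ENNReal.ofReal c ^ p / ENNReal.ofReal u ^ p := by
          rw [ENNReal.le_div_iff_mul_le (.inl hu_ne_zero) (.inl (by simp [hp.le])), mul_comm]
          exact hmarkov
      _ = ENNReal.ofReal (Real.exp (-(p * Real.log u - p * Real.log c))) := by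
          rw [ENNReal.ofReal_rpow_of_pos hc, ENNReal.ofReal_rpow_of_pos hu,
            ← ENNReal.ofReal_div_of_pos (Real.rpow_pos_of_pos hu p), Real.rpow_def_of_pos hc,
            Real.rpow_def_of_pos hu, ← Real.exp_sub]
          ring_nf

end Tail

theorem le_ofReal_exp_neg_sSup {a : ℝ≥0∞} (ha : a ≤ 1) {X : Set ℝ}
    (h : ∀ x ∈ X, a ≤ ENNReal.ofReal (Real.exp (-x))) :
    a ≤ ENNReal.ofReal (Real.exp (-sSup X)) := by
  rcases eq_or_ne a 0 with rfl | ha0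
  · exact zero_le
  have ht : 0 < a.toReal := ENNReal.toReal_pos ha0 (ha.trans_lt one_lt_top).ne
  have hbound : ∀ x ∈ X, x ≤ -Real.log a.toReal := fun x hx => by
    have := Real.log_le_log ht (ENNReal.toReal_le_of_le_ofReal (Real.exp_nonneg _) (h x hx))
    rw [Real.log_exp] at this
    linarith
  have ht_le_one : a.toReal ≤ 1 := ENNReal.toReal_le_of_le_ofReal zero_le_one (by simpa)
  -- `0 ≤ -log a` also covers the junk value `sSup X = 0` for empty or unbounded `X`
  have hsSup : sSup X ≤ -Real.log a.toReal :=
    Real.sSup_le hbound (neg_nonneg.2 (Real.log_nonpos ht.le ht_le_one))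
  rw [← ENNReal.ofReal_toReal (ha.trans_lt one_lt_top).ne]
  gcongr
  calc a.toReal = Real.exp (Real.log a.toReal) := (Real.exp_log ht).symm
    _ ≤ Real.exp (-sSup X) := Real.exp_le_exp.2 (by linarith)

theorem stmt9_general {Ω : Type*} [MeasurableSpace Ω] (P : Measure Ω) [IsProbabilityMeasure P]
    (f : Ω → ℝ) (hf : Measurable f)
    (B : ℝ≥0∞)
    (S : Set ℝ) (hS : S = {p : ℝ | 1 < p ∧ ENNReal.ofReal p < B})
    (ψ : ℝ → ℝ)
    (hmom : ∀ p ∈ S,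
      (∫⁻ ω, (ENNReal.ofReal |f ω|) ^ p ∂P) ^ (1 / p) ≤ ENNReal.ofReal (ψ p)) :
    ∀ u : ℝ, Real.exp 1 < u →
      max (P {ω | f ω > u}) (P {ω | f ω < -u})
        ≤ ENNReal.ofReal (Real.exp
            (-(sSup {x : ℝ | ∃ p ∈ S, x = p * |Real.log u| - p * Real.log (ψ p)}))) := by
  intro u hu
  have hu_pos : 0 < u := (Real.exp_pos 1).trans hu
  have hlog_u : |Real.log u| = Real.log u :=
    abs_of_pos (Real.log_pos ((Real.one_lt_exp_iff.2 one_pos).trans hu))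
  calc max (P {ω | f ω > u}) (P {ω | f ω < -u}) ≤ P {ω | u ≤ |f ω|} :=
        max_le (measure_mono fun ω (h : u < f ω) => h.le.trans (le_abs_self _))
          (measure_mono fun ω (h : f ω < -u) => (lt_neg.1 h).le.trans (neg_le_abs _))
    _ ≤ _ := by
        refine le_ofReal_exp_neg_sSup prob_le_one ?_
        rintro _ ⟨p, hp, rfl⟩
        rw [hlog_u]
        have hp_pos : 0 < p := one_pos.trans (hS ▸ hp).1
        exact measure_le_abs_le_exp_of_moment_le hf hp_pos hu_pos (hmom p hp)

/-- if `(E|f|^p)^{1/p} ≤ ψ(p)` for all `p` in the support `(1,B)` of `ψ`,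
then `T_f(u) = max(P(f > u), P(f < −u)) ≤ exp(−ψ̃*(ln u))` for `u > e`, where
`ψ̃(p) = p ln ψ(p)` and `ψ̃*(y) = sup_{p ∈ (1,B)} (p|y| − ψ̃(p))`. -/
theorem stmt9 {Ω : Type*} [MeasurableSpace Ω] (P : Measure Ω) [IsProbabilityMeasure P]
    (f : Ω → ℝ) (hf : Measurable f)
    (B : ℝ≥0∞) (hB : 1 < B)
    (S : Set ℝ) (hS : S = {p : ℝ | 1 < p ∧ ENNReal.ofReal p < B})
    (ψ : ℝ → ℝ) (hψcont : ContinuousOn ψ S)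
    (hψpos : ∃ c : ℝ, 0 < c ∧ ∀ p ∈ S, c ≤ ψ p)
    (hmom : ∀ p ∈ S,
      (∫⁻ ω, (ENNReal.ofReal |f ω|) ^ p ∂P) ^ (1 / p) ≤ ENNReal.ofReal (ψ p)) :
    ∀ u : ℝ, Real.exp 1 < u →
      max (P {ω | f ω > u}) (P {ω | f ω < -u})
        ≤ ENNReal.ofReal (Real.exp
            (-(sSup {x : ℝ | ∃ p ∈ S, x = p * |Real.log u| - p * Real.log (ψ p)}))) :=
  stmt9_general P f hf B S hS ψ hmom
end

section
/- If a random variable f satisfies (E|f|^m)^{1/m} ≤ m^{1/l} for all m ≥ 1, where l > 0, then there exists a constant C(l) > 0 such that P(|f| > u) ≤ exp(−C(l) u^l) for all u ≥ 1. -/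
/-!
Markov's inequality for the `m`-th moment gives `P(|f| > u) ≤ (m ^ (1 / l) / u) ^ m`, and the
choice `m = u ^ l / e` turns this into `exp (-u ^ l / (e l))` as soon as `u ^ l ≥ e`. On the
remaining bounded range `1 ≤ u`, `u ^ l < e`, it suffices that `P(|f| > 1) < 1`, which holds
because `E|f| ≤ 1` while `|f| > 1` almost surely would force `E|f| > 1`.
-/

open MeasureTheory ENNReal Filter Topology

theorem exists_pos_lt_ofReal_exp_neg_mul {p : ℝ≥0∞} (hp : p < 1) (a : ℝ) :
    ∃ c : ℝ, 0 < c ∧ p < ENNReal.ofReal (Real.exp (-c * a)) := by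
  have h_cont : Tendsto (fun c : ℝ => ENNReal.ofReal (Real.exp (-c * a))) (𝓝 0) (𝓝 1) := by
    have : Continuous fun c : ℝ => ENNReal.ofReal (Real.exp (-c * a)) :=
      ENNReal.continuous_ofReal.comp (by fun_prop)
    simpa using this.tendsto 0
  have h_ev : ∀ᶠ c in 𝓝[>] (0 : ℝ), p < ENNReal.ofReal (Real.exp (-c * a)) :=
    nhdsWithin_le_nhds (h_cont.eventually (lt_mem_nhds hp))
  exact ((eventually_mem_nhdsWithin (s := Set.Ioi 0)).and h_ev).exists

section

variable {Ω : Type*} [MeasurableSpace Ω] {μ : Measure Ω}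

theorem measure_abs_gt_le_rpow_of_moment_le {f : Ω → ℝ} (hf : AEMeasurable f μ) {m M u : ℝ}
    (hm : 0 < m) (hM : 0 ≤ M) (hu : 0 < u)
    (hmom : (∫⁻ ω, ENNReal.ofReal |f ω| ^ m ∂μ) ^ (1 / m) ≤ ENNReal.ofReal M) :
    μ {ω | |f ω| > u} ≤ ENNReal.ofReal ((M / u) ^ m) := by
  have hmom' : ∫⁻ ω, ENNReal.ofReal |f ω| ^ m ∂μ ≤ ENNReal.ofReal M ^ m := by
    rwa [one_div, ENNReal.rpow_inv_le_iff hm] at hmom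
  have hu_pow : ENNReal.ofReal u ^ m ≠ 0 := by
    simp [ENNReal.rpow_eq_zero_iff, hu, hm]
  calc μ {ω | |f ω| > u}
      ≤ μ {ω | ENNReal.ofReal u ^ m ≤ ENNReal.ofReal |f ω| ^ m} := by
        refine measure_mono fun ω hω => ?_
        exact ENNReal.rpow_le_rpow (ENNReal.ofReal_le_ofReal hω.le) hm.le
    _ ≤ (∫⁻ ω, ENNReal.ofReal |f ω| ^ m ∂μ) / ENNReal.ofReal u ^ m :=
        meas_ge_le_lintegral_div (by fun_prop) hu_pow
          (ENNReal.rpow_ne_top_of_nonneg hm.le ENNReal.ofReal_ne_top)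
    _ ≤ ENNReal.ofReal M ^ m / ENNReal.ofReal u ^ m := by gcongr
    _ = ENNReal.ofReal ((M / u) ^ m) := by
        rw [← ENNReal.div_rpow_of_nonneg _ _ hm.le, ← ENNReal.ofReal_div_of_pos hu,
          ENNReal.ofReal_rpow_of_nonneg (div_nonneg hM hu.le) hm.le]

theorem measure_lt_lt_one_of_lintegral_le [IsProbabilityMeasure μ] {g : Ω → ℝ≥0∞}
    (hg : AEMeasurable g μ) {c : ℝ≥0∞} (hc : c ≠ ∞) (h : ∫⁻ ω, g ω ∂μ ≤ c) :
    μ {ω | c < g ω} < 1 := by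
  refine lt_of_le_of_ne prob_le_one fun h_one => ?_
  have h_ae : ∀ᵐ ω ∂μ, c < g ω := by
    rwa [ae_iff_measure_eq (nullMeasurableSet_lt aemeasurable_const hg), measure_univ]
  have := lintegral_strict_mono (IsProbabilityMeasure.ne_zero μ) hg (by simpa using hc) h_ae
  simp only [lintegral_const, measure_univ, mul_one] at this
  exact (this.trans_le h).false

theorem measure_abs_gt_le_exp_of_moment_growth {f : Ω → ℝ} (hf : AEMeasurable f μ) {l : ℝ}
    (hl : 0 < l)
    (hmom : ∀ m : ℝ, 1 ≤ m →
      (∫⁻ ω, (ENNReal.ofReal |f ω|) ^ m ∂μ) ^ (1 / m) ≤ ENNReal.ofReal (m ^ (1 / l)))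
    {u : ℝ} (hu : 0 < u) (hul : Real.exp 1 ≤ u ^ l) :
    μ {ω | |f ω| > u} ≤ ENNReal.ofReal (Real.exp (-(1 / (Real.exp 1 * l)) * u ^ l)) := by
  let m := u ^ l / Real.exp 1
  have hm : 1 ≤ m := (one_le_div (Real.exp_pos 1)).2 hul
  have hratio : m ^ (1 / l) / u = Real.exp (-(1 / l)) := by
    rw [Real.div_rpow (by positivity) (Real.exp_pos 1).le, ← Real.rpow_mul hu.le,
      mul_one_div_cancel hl.ne', Real.rpow_one, Real.exp_one_rpow, div_div_cancel_left' hu.ne',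
      Real.exp_neg]
  convert measure_abs_gt_le_rpow_of_moment_le hf (by linarith) (by positivity) hu (hmom m hm)
    using 2
  rw [hratio, ← Real.exp_mul]
  congr 1
  ring

end

/-- if `(E|f|^m)^{1/m} ≤ m^{1/l}` for all `m ≥ 1`, where `l > 0`, then
there exists `C(l) > 0` with `P(|f| > u) ≤ exp(−C(l) u^l)` for all `u ≥ 1`. -/
theorem stmt10 {Ω : Type*} [MeasurableSpace Ω] (P : Measure Ω) [IsProbabilityMeasure P]
    (f : Ω → ℝ) (hf : Measurable f) (l : ℝ) (hl : 0 < l)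
    (hmom : ∀ m : ℝ, 1 ≤ m →
      (∫⁻ ω, (ENNReal.ofReal |f ω|) ^ m ∂P) ^ (1 / m) ≤ ENNReal.ofReal (m ^ (1 / l))) :
    ∃ C : ℝ, 0 < C ∧ ∀ u : ℝ, 1 ≤ u →
      P {ω | |f ω| > u} ≤ ENNReal.ofReal (Real.exp (-C * u ^ l)) := by
  have h_one : P {ω | |f ω| > 1} < 1 := by
    have h_first : ∫⁻ ω, ENNReal.ofReal |f ω| ∂P ≤ 1 := by simpa using hmom 1 le_rfl
    simpa [ENNReal.one_lt_ofReal] using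
      measure_lt_lt_one_of_lintegral_le (by fun_prop) ENNReal.one_ne_top h_first
  obtain ⟨c, hc, h_one_le⟩ := exists_pos_lt_ofReal_exp_neg_mul h_one (Real.exp 1)
  refine ⟨min c (1 / (Real.exp 1 * l)), by positivity, fun u hu => ?_⟩
  have hul : 0 ≤ u ^ l := by positivity
  rcases le_total (u ^ l) (Real.exp 1) with h_small | h_large
  · calc P {ω | |f ω| > u} ≤ P {ω | |f ω| > 1} := measure_mono fun ω hω => hu.trans_lt hω
      _ ≤ ENNReal.ofReal (Real.exp (-c * Real.exp 1)) := h_one_le.le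
      _ ≤ _ := by
          refine ENNReal.ofReal_le_ofReal (Real.exp_le_exp.2 ?_)
          rw [neg_mul, neg_mul, neg_le_neg_iff]
          exact mul_le_mul (min_le_left _ _) h_small hul hc.le
  · refine (measure_abs_gt_le_exp_of_moment_growth hf.aemeasurable hl hmom (by linarith)
      h_large).trans ?_
    refine ENNReal.ofReal_le_ofReal (Real.exp_le_exp.2 ?_)
    exact mul_le_mul_of_nonneg_right (neg_le_neg (min_le_right _ _)) hul
end

section
/- If a random variable f satisfies (E|f|^m)^{1/m} ≤ (θ̃ − m)^{−1/s} for all 1 ≤ m < θ̃, where θ̃ > 1 and s ≥ 1, then there is a constant C = C(θ̃, s) such that P(|f| > u) ≤ C · u^{−θ̃} · (ln u)^{θ̃/s} for all u > e². -/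
open MeasureTheory ENNReal

/-- if `(E|f|^m)^{1/m} ≤ (θ̃ − m)^{−1/s}` for all `1 ≤ m < θ̃`, where
`θ̃ > 1` and `s ≥ 1`, then there is `C = C(θ̃,s)` with
`P(|f| > u) ≤ C · u^{−θ̃} · (ln u)^{θ̃/s}` for all `u > e²`. -/
theorem stmt11 {Ω : Type*} [MeasurableSpace Ω] (P : Measure Ω) [IsProbabilityMeasure P]
    (f : Ω → ℝ) (hf : Measurable f) (θ s : ℝ) (hθ : 1 < θ) (hs : 1 ≤ s)
    (hmom : ∀ m : ℝ, 1 ≤ m → m < θ →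
      (∫⁻ ω, (ENNReal.ofReal |f ω|) ^ m ∂P) ^ (1 / m)
        ≤ ENNReal.ofReal ((θ - m) ^ (-(1 / s)))) :
    ∃ C : ℝ, 0 < C ∧ ∀ u : ℝ, Real.exp 2 < u →
      P {ω | |f ω| > u}
        ≤ ENNReal.ofReal (C * u ^ (-θ) * Real.log u ^ (θ / s)) := by
  have hθ1 : 0 < θ - 1 := by linarith
  have hs0 : 0 < s := by linarith
  set C : ℝ := Real.exp (θ / (θ - 1)) with hCdef
  have hC1 : 1 ≤ C := Real.one_le_exp (by positivity)
  refine ⟨C, lt_of_lt_of_le one_pos hC1, fun u hu => ?_⟩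
  have hu0 : 0 < u := (Real.exp_pos 2).trans hu
  have hL2 : 2 < Real.log u := (Real.lt_log_iff_exp_lt hu0).2 hu
  have hL0 : 0 < Real.log u := by linarith
  set L : ℝ := Real.log u with hLdef
  set m : ℝ := θ - 1 / L with hmdef
  have hmθ : m < θ := by
    have : 0 < 1 / L := by positivity
    simp only [hmdef]; linarith
  by_cases hm1 : 1 ≤ m
  · -- Markov case
    have hm0 : 0 < m := by linarith
    have hmom' := hmom m hm1 hmθ
    have hθm : θ - m = 1 / L := by simp [hmdef]
    -- integral bound
    have hint : (∫⁻ ω, (ENNReal.ofReal |f ω|) ^ m ∂P)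
        ≤ ENNReal.ofReal (((θ - m) ^ (-(1 / s))) ^ m) := by
      have h1 : (∫⁻ ω, (ENNReal.ofReal |f ω|) ^ m ∂P)
          = ((∫⁻ ω, (ENNReal.ofReal |f ω|) ^ m ∂P) ^ (1 / m)) ^ m := by
        rw [← ENNReal.rpow_mul, one_div, inv_mul_cancel₀ hm0.ne', ENNReal.rpow_one]
      have hθm0 : (0:ℝ) < θ - m := by rw [hθm]; exact one_div_pos.2 hL0
      rw [h1, ← ENNReal.ofReal_rpow_of_nonneg (Real.rpow_nonneg hθm0.le _) hm0.le]
      exact ENNReal.rpow_le_rpow hmom' hm0.le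
    -- Markov
    have hmeas : AEMeasurable (fun ω => (ENNReal.ofReal |f ω|) ^ m) P :=
      ((ENNReal.measurable_ofReal.comp hf.abs).pow_const m).aemeasurable
    have hmarkov := mul_meas_ge_le_lintegral₀ hmeas ((ENNReal.ofReal u) ^ m)
    have hsub : P {ω | |f ω| > u}
        ≤ P {ω | (ENNReal.ofReal u) ^ m ≤ (ENNReal.ofReal |f ω|) ^ m} := by
      apply measure_mono
      intro ω hω
      exact ENNReal.rpow_le_rpow (ENNReal.ofReal_le_ofReal (le_of_lt hω)) hm0.le
    have hεne : (ENNReal.ofReal u) ^ m ≠ 0 :=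
      (ENNReal.rpow_pos (ENNReal.ofReal_pos.2 hu0) ENNReal.ofReal_ne_top).ne'
    have hεtop : (ENNReal.ofReal u) ^ m ≠ ⊤ :=
      ENNReal.rpow_ne_top_of_nonneg hm0.le ENNReal.ofReal_ne_top
    have hkey : P {ω | |f ω| > u}
        ≤ ENNReal.ofReal (((θ - m) ^ (-(1 / s))) ^ m) / (ENNReal.ofReal u) ^ m := by
      rw [ENNReal.le_div_iff_mul_le (Or.inl hεne) (Or.inl hεtop), mul_comm]
      calc (ENNReal.ofReal u) ^ m * P {ω | |f ω| > u}
          ≤ (ENNReal.ofReal u) ^ m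
            * P {ω | (ENNReal.ofReal u) ^ m ≤ (ENNReal.ofReal |f ω|) ^ m} :=
            mul_le_mul_right hsub _
        _ ≤ ∫⁻ ω, (ENNReal.ofReal |f ω|) ^ m ∂P := hmarkov
        _ ≤ _ := hint
    refine hkey.trans ?_
    rw [ENNReal.ofReal_rpow_of_pos hu0, ← ENNReal.ofReal_div_of_pos (by positivity)]
    apply ENNReal.ofReal_le_ofReal
    have hrw : ((θ - m) ^ (-(1 / s))) ^ m / u ^ m
        = Real.exp 1 * u ^ (-θ) * L ^ (m / s) := by
      rw [hθm]
      rw [show ((1 / L : ℝ) ^ (-(1 / s))) = L ^ (1 / s) by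
        rw [one_div, Real.inv_rpow hL0.le, ← Real.rpow_neg hL0.le, neg_neg]]
      rw [← Real.rpow_mul hL0.le]
      rw [show ((1:ℝ) / s) * m = m / s by ring]
      have hupow : u ^ m = u ^ θ * (Real.exp 1)⁻¹ := by
        rw [Real.rpow_def_of_pos hu0, Real.rpow_def_of_pos hu0, ← Real.exp_neg,
          ← Real.exp_add]
        congr 1
        have h3 : Real.log u * m = Real.log u * θ - L * (1 / L) := by
          simp only [hmdef]; ring
        rw [h3, mul_one_div, div_self hL0.ne']
        ring
      rw [hupow, Real.rpow_neg hu0.le]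
      field_simp
    rw [hrw]
    have hexpC : Real.exp 1 ≤ C := by
      rw [hCdef, Real.exp_le_exp, le_div_iff₀ hθ1]
      linarith
    have hLpow : L ^ (m / s) ≤ L ^ (θ / s) :=
      Real.rpow_le_rpow_of_exponent_le (by linarith) (by gcongr)
    have hup : (0:ℝ) < u ^ (-θ) := Real.rpow_pos_of_pos hu0 _
    have hC0 : (0:ℝ) < C := lt_of_lt_of_le one_pos hC1
    exact mul_le_mul (mul_le_mul_of_nonneg_right hexpC hup.le) hLpow
      (Real.rpow_pos_of_pos hL0 _).le (mul_nonneg hC0.le hup.le)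
  · -- trivial case: u is bounded
    push_neg at hm1
    have hm1' : θ - 1 / L < 1 := hmdef ▸ hm1
    have hLb : L * (θ - 1) < 1 := by
      have h4 : θ - 1 < 1 / L := by linarith
      calc L * (θ - 1) < L * (1 / L) := by
            exact mul_lt_mul_of_pos_left h4 hL0
        _ = 1 := by field_simp
    have huθ : u ^ θ ≤ C := by
      rw [Real.rpow_def_of_pos hu0, hCdef, Real.exp_le_exp, div_eq_mul_inv]
      have h2 : L * θ * (θ - 1) < θ := by nlinarith
      rw [← hLdef]
      calc L * θ = L * θ * (θ - 1) * (θ - 1)⁻¹ := by field_simp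
        _ ≤ θ * (θ - 1)⁻¹ :=
            mul_le_mul_of_nonneg_right h2.le (by positivity)
    have h1 : 1 ≤ C * u ^ (-θ) := by
      rw [Real.rpow_neg hu0.le, ← div_eq_mul_inv, le_div_iff₀ (by positivity), one_mul]
      exact huθ
    have h2 : 1 ≤ L ^ (θ / s) := Real.one_le_rpow (by linarith) (by positivity)
    calc P {ω | |f ω| > u} ≤ 1 := prob_le_one
      _ = ENNReal.ofReal 1 := by simp
      _ ≤ _ := by
          apply ENNReal.ofReal_le_ofReal
          nlinarith
end
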